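/- arXiv:2507.07007 — 2 statements merged into one kernel-verified Lean document; each statement's English description precedes it below -/
import Mathlib

section
/- Let f : S¹ → ℕ. Let v = ((m_1,r_1),…,(m_n,r_n)) and w = ((m_1',r_1'),…,(m_m',r_m')) be lists of disk data with all radii > 0 such that both {x ∈ S¹ : H_v(x) ≠ f(x)} and {x ∈ S¹ : H_w(x) ≠ f(x)} are finite. Suppose that H_w is properly upper semicontinuous, every boundary trace ∂h_{(m_i',r_i')} has exactly 0 or exactly 2 elements, the number of indices i with S¹ ⊆ {y : ‖y − m_i'‖ ≤ r_i'} equals the number of indices j with S¹ ⊆ {y : ‖y − m_j‖ ≤ r_j}, and no index i of w satisfies {y : ‖y − m_i'‖ ≤ r_i'} ∩ S¹ = ∅. Then m ≤ n. -/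
noncomputable section

open scoped BigOperators
open Classical

/-- The unit circle `S¹` in the plane (modeled as `ℂ ≅ ℝ²` with the Euclidean norm). -/
def S1 : Set ℂ := {x : ℂ | ‖x‖ = 1}

/-- The signal function `h_{(m,r)}`: indicator of the closed disk of center `m`, radius `r`. -/
def signal (m : ℂ) (r : ℝ) (x : ℂ) : ℕ := if ‖x - m‖ ≤ r then 1 else 0

/-- The boundary trace `∂h_{(m,r)} = {x ∈ S¹ : ‖x − m‖ = r}`. -/
def bTrace (m : ℂ) (r : ℝ) : Set ℂ := {x : ℂ | ‖x‖ = 1 ∧ ‖x - m‖ = r}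

/-- The sum `H_v` of the signal functions of the disk data `v = ((m_i, r_i))_{i<n}`. -/
def Hsum {n : ℕ} (v : Fin n → ℂ × ℝ) (x : ℂ) : ℕ := ∑ i, signal (v i).1 (v i).2 x

/-- Rotation of the plane by angle `t` about the origin. -/
def rot (t : ℝ) (x : ℂ) : ℂ := Complex.exp (t * Complex.I) * x

/-- `H(x⁺) = a`: `H` equals `a` just after `x` (counterclockwise). -/
def rightVal (H : ℂ → ℕ) (x : ℂ) (a : ℕ) : Prop :=
  ∃ δ > (0 : ℝ), ∀ t : ℝ, 0 < t → t < δ → H (rot t x) = a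

/-- `H(x⁻) = b`: `H` equals `b` just before `x`. -/
def leftVal (H : ℂ → ℕ) (x : ℂ) (b : ℕ) : Prop :=
  ∃ δ > (0 : ℝ), ∀ t : ℝ, -δ < t → t < 0 → H (rot t x) = b

/-- `H` is properly upper semicontinuous on `S¹`: at each point both one-sided limits
exist and the value equals their maximum. -/
def ProperlyUSC (H : ℂ → ℕ) : Prop :=
  ∀ x ∈ S1, ∃ a b : ℕ, rightVal H x a ∧ leftVal H x b ∧ H x = max a b

/-- `H* = max_{S¹} H`. -/
def maxOnS1 (H : ℂ → ℕ) : ℕ := sSup (H '' S1)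

/-- `H_* = min_{S¹} H`. -/
def minOnS1 (H : ℂ → ℕ) : ℕ := sInf (H '' S1)

/-- The superlevel set `{x ∈ S¹ : H(x) ≥ k}`. -/
def superlevel (H : ℂ → ℕ) (k : ℕ) : Set ℂ := {x ∈ S1 | k ≤ H x}

/-- Number of connected components of a subset of the plane. -/
def numCC (A : Set ℂ) : ℕ := Nat.card (ConnectedComponents ↥A)

/-- `τ(H) = Σ_{k=H_*+1}^{H*} (c_k(H) − 1)`. -/
def tau (H : ℂ → ℕ) : ℕ :=
  ∑ k ∈ Finset.Icc (minOnS1 H + 1) (maxOnS1 H), (numCC (superlevel H k) - 1)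

/-- `ρ` for the degrees-of-freedom count. -/
def rho (m : ℂ) (r : ℝ) : ℕ :=
  if bTrace m r = ∅ then 3
  else if (bTrace m r).ncard = 1 ∨ (bTrace m r).ncard = 2 then 1
  else 0

/-- `N`-degrees of freedom of a decomposition with `n ≤ N` signals. -/
def DoF (N : ℕ) {n : ℕ} (v : Fin n → ℂ × ℝ) : ℕ :=
  3 * (N - n) + ∑ i, rho (v i).1 (v i).2

/-!
Count jumps along the circle. A signal `h_{(m,r)}` jumps (by `±1`) only at points of its boundary
trace, which has at most two points unless `m = 0`, in which case the signal is rotation invariant;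
it never jumps if `S¹` lies in the disk. When the trace has exactly two points, the two circles
cross transversally there, so both are genuine jumps; and a disk meeting `S¹` without containing it
has a nonempty trace. Since `H_v` and `H_w` agree off a finite set they have the same jumps, and the
jump of a sum is the sum of the jumps. Proper upper semicontinuity of `H_w` forbids one disk of `w`
to jump up where another jumps down, so nothing cancels in `H_w`: the total variation of `H_w` is
`2 · #{disks of w not containing S¹}`, while that of `H_v` is at most
`2 · #{disks of v not containing S¹}`.
-/

open Filter Topology Set Real ComplexConjugate

lemma norm_rot (t : ℝ) (x : ℂ) : ‖rot t x‖ = ‖x‖ := by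
  simp [rot, Complex.norm_exp_ofReal_mul_I]

lemma rot_zero (x : ℂ) : rot 0 x = x := by simp [rot]

lemma rot_re (t : ℝ) (x : ℂ) : (rot t x).re = cos t * x.re - sin t * x.im := by
  simp [rot, Complex.exp_mul_I, ← Complex.ofReal_cos, ← Complex.ofReal_sin]

lemma rot_im (t : ℝ) (x : ℂ) : (rot t x).im = cos t * x.im + sin t * x.re := by
  simp [rot, Complex.exp_mul_I, ← Complex.ofReal_cos, ← Complex.ofReal_sin]

lemma rot_mem_S1 {x : ℂ} (hx : x ∈ S1) (t : ℝ) : rot t x ∈ S1 := by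
  simpa [S1, norm_rot] using hx

lemma continuous_rot (x : ℂ) : Continuous fun t : ℝ => rot t x := by
  unfold rot; fun_prop

lemma hasDerivAt_rot_zero (x : ℂ) : HasDerivAt (fun t : ℝ => rot t x) (Complex.I * x) 0 := by
  simpa [rot] using ((hasDerivAt_id (0 : ℝ)).ofReal_comp.mul_const Complex.I).cexp.mul_const x

lemma eventually_rot_notMem {F : Set ℂ} (hF : F.Finite) {x : ℂ} (hx : x ≠ 0) :
    ∀ᶠ t in 𝓝[≠] 0, rot t x ∉ F := by
  filter_upwards [hF.eventually_all.2 fun y _ =>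
    (hasDerivAt_rot_zero x).eventually_ne (c := y) (mul_ne_zero Complex.I_ne_zero hx)]
    with t ht hmem using ht _ hmem rfl

lemma rightVal_iff {H : ℂ → ℕ} {x : ℂ} {a : ℕ} :
    rightVal H x a ↔ ∀ᶠ t in 𝓝[>] 0, H (rot t x) = a := by
  simp only [(nhdsGT_basis (0 : ℝ)).eventually_iff, rightVal, mem_Ioo, and_imp]

lemma leftVal_iff {H : ℂ → ℕ} {x : ℂ} {a : ℕ} :
    leftVal H x a ↔ ∀ᶠ t in 𝓝[<] 0, H (rot t x) = a := by
  simp only [(nhdsLT_basis (0 : ℝ)).eventually_iff, leftVal, mem_Ioo, and_imp]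
  constructor
  · rintro ⟨δ, hδ, h⟩
    exact ⟨-δ, neg_neg_of_pos hδ, h⟩
  · rintro ⟨δ, hδ, h⟩
    exact ⟨-δ, neg_pos_of_neg hδ, by simpa using h⟩

/-- For `l = 𝓝[>] 0` (resp. `𝓝[<] 0`) this is `H(x⁺)` (resp. `H(x⁻)`); it is a junk value unless
`HasSideLim l H x`. -/
def sideLim (l : Filter ℝ) (H : ℂ → ℕ) (x : ℂ) : ℕ := limUnder l fun t => H (rot t x)

def HasSideLim (l : Filter ℝ) (H : ℂ → ℕ) (x : ℂ) : Prop :=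
  ∀ᶠ t in l, H (rot t x) = sideLim l H x

def jump (H : ℂ → ℕ) (x : ℂ) : ℤ := sideLim (𝓝[>] 0) H x - sideLim (𝓝[<] 0) H x

def jumpSet (H : ℂ → ℕ) : Set ℂ := {x ∈ S1 | jump H x ≠ 0}

section SideLim

variable {l : Filter ℝ} {H H' : ℂ → ℕ} {x : ℂ} {a : ℕ}

lemma sideLim_eq [l.NeBot] (h : ∀ᶠ t in l, H (rot t x) = a) : sideLim l H x = a :=
  (tendsto_pure.2 h |>.mono_right (pure_le_nhds a)).limUnder_eq

lemma hasSideLim_of_eventually [l.NeBot] (h : ∀ᶠ t in l, H (rot t x) = a) : HasSideLim l H x := by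
  rwa [HasSideLim, sideLim_eq h]

lemma HasSideLim.sideLim_congr [l.NeBot] (hH : HasSideLim l H x)
    (h : ∀ᶠ t in l, H' (rot t x) = H (rot t x)) : sideLim l H' x = sideLim l H x :=
  sideLim_eq <| (h.and hH).mono fun _ ht => ht.1.trans ht.2

lemma HasSideLim.sideLim_le [l.NeBot] {b : ℕ} (hH : HasSideLim l H x) (hb : ∀ t, H (rot t x) ≤ b) :
    sideLim l H x ≤ b := by
  obtain ⟨t, ht⟩ := hH.exists
  exact ht ▸ hb t

lemma jump_eq_zero_of_rot_eq (h : ∀ t, H (rot t x) = H x) : jump H x = 0 := by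
  simp [jump, sideLim_eq (l := 𝓝[>] 0) (Eventually.of_forall h),
    sideLim_eq (l := 𝓝[<] 0) (Eventually.of_forall h)]

end SideLim

/-- In this half-angle form `sin (t / 2)` carries the side of `t = 0` and the second factor tends
to `(conj m * x).im`, which decides on which side of a boundary point the disk lies. -/
lemma norm_rot_sub_sq (m x : ℂ) (t : ℝ) :
    ‖rot t x - m‖ ^ 2 = ‖x - m‖ ^ 2 +
      4 * (sin (t / 2) * ((conj m * x).re * sin (t / 2) + (conj m * x).im * cos (t / 2))) := by
  have ht : t = 2 * (t / 2) := by ring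
  have hsin : sin t = 2 * sin (t / 2) * cos (t / 2) := by rw [ht, sin_two_mul]; ring_nf
  have hcos : cos t = 1 - 2 * sin (t / 2) ^ 2 := by rw [ht, cos_two_mul, cos_sq']; ring_nf
  simp only [Complex.sq_norm, Complex.normSq_apply, Complex.sub_re, Complex.sub_im, rot_re, rot_im,
    Complex.mul_re, Complex.mul_im, Complex.conj_re, Complex.conj_im]
  linear_combination (x.re ^ 2 + x.im ^ 2) * sin_sq_add_cos_sq t
    + (2 * x.im * m.re - 2 * x.re * m.im) * hsin - 2 * (x.re * m.re + x.im * m.im) * hcos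

lemma eventually_sin_half_pos : ∀ᶠ t in 𝓝[>] (0 : ℝ), 0 < sin (t / 2) := by
  filter_upwards [Ioo_mem_nhdsGT pi_pos] with t ht
  exact sin_pos_of_pos_of_lt_pi (by linarith [ht.1]) (by linarith [ht.2, pi_pos])

lemma eventually_sin_half_neg : ∀ᶠ t in 𝓝[<] (0 : ℝ), sin (t / 2) < 0 := by
  filter_upwards [Ioo_mem_nhdsLT (neg_lt_zero.2 pi_pos)] with t ht
  exact sin_neg_of_neg_of_neg_pi_lt (by linarith [ht.2]) (by linarith [ht.1, pi_pos])

lemma side_neBot_and_le_nhdsNE {l : Filter ℝ} (hl : l = 𝓝[>] 0 ∨ l = 𝓝[<] 0) :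
    l.NeBot ∧ l ≤ 𝓝[≠] 0 := by
  rcases hl with rfl | rfl
  · exact ⟨inferInstance, nhdsWithin_mono _ fun _ ht => ne_of_gt ht⟩
  · exact ⟨inferInstance, nhdsWithin_mono _ fun _ ht => ne_of_lt ht⟩

section Signal

variable {m : ℂ} {r : ℝ} {x : ℂ} {l : Filter ℝ}

lemma signal_le_one (m : ℂ) (r : ℝ) (y : ℂ) : signal m r y ≤ 1 := by
  unfold signal; split_ifs <;> simp

lemma eventually_signal_rot_eq_of_ne (h : ‖x - m‖ ≠ r) :
    ∀ᶠ t in 𝓝 0, signal m r (rot t x) = signal m r x := by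
  have hc : ContinuousAt (fun t => ‖rot t x - m‖) 0 :=
    ((continuous_rot x).sub continuous_const).norm.continuousAt
  rcases h.lt_or_gt with hlt | hgt
  · filter_upwards [hc.eventually_lt continuousAt_const (by simpa [rot_zero] using hlt)] with t ht
    simp [signal, ht.le, hlt.le]
  · filter_upwards [continuousAt_const.eventually_lt hc (by simpa [rot_zero] using hgt)] with t ht
    simp [signal, not_le.2 ht, not_le.2 hgt]

lemma signal_rot_of_norm_sub_eq (h : ‖x - m‖ = r) (t : ℝ) :
    signal m r (rot t x) = if sin (t / 2) *
      ((conj m * x).re * sin (t / 2) + (conj m * x).im * cos (t / 2)) ≤ 0 then 1 else 0 := by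
  refine if_congr ?_ rfl rfl
  rw [← h, ← sq_le_sq₀ (norm_nonneg _) (norm_nonneg _), norm_rot_sub_sq]
  constructor <;> intro <;> linarith

lemma signal_rot_transverse (h : ‖x - m‖ = r) (hc : (conj m * x).im ≠ 0) :
    ∃ a b : ℕ, a ≠ b ∧ (∀ᶠ t in 𝓝[>] 0, signal m r (rot t x) = a) ∧
      ∀ᶠ t in 𝓝[<] 0, signal m r (rot t x) = b := by
  have hq : Tendsto (fun t : ℝ => (conj m * x).re * sin (t / 2) + (conj m * x).im * cos (t / 2))
      (𝓝 0) (𝓝 (conj m * x).im) := by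
    have : Continuous fun t : ℝ =>
        (conj m * x).re * sin (t / 2) + (conj m * x).im * cos (t / 2) := by fun_prop
    simpa using this.tendsto 0
  rcases hc.lt_or_gt with hneg | hpos
  · have hq' := hq.eventually_lt_const hneg
    refine ⟨1, 0, one_ne_zero, ?_, ?_⟩
    · filter_upwards [eventually_sin_half_pos, nhdsWithin_le_nhds hq'] with t hs hqt
      rw [signal_rot_of_norm_sub_eq h, if_pos (mul_nonpos_of_nonneg_of_nonpos hs.le hqt.le)]
    · filter_upwards [eventually_sin_half_neg, nhdsWithin_le_nhds hq'] with t hs hqt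
      rw [signal_rot_of_norm_sub_eq h, if_neg (not_le.2 (mul_pos_of_neg_of_neg hs hqt))]
  · have hq' := hq.eventually_const_lt hpos
    refine ⟨0, 1, zero_ne_one, ?_, ?_⟩
    · filter_upwards [eventually_sin_half_pos, nhdsWithin_le_nhds hq'] with t hs hqt
      rw [signal_rot_of_norm_sub_eq h, if_neg (not_le.2 (mul_pos hs hqt))]
    · filter_upwards [eventually_sin_half_neg, nhdsWithin_le_nhds hq'] with t hs hqt
      rw [signal_rot_of_norm_sub_eq h, if_pos (mul_nonpos_of_nonpos_of_nonneg hs.le hqt.le)]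

lemma signal_rot_tangent (h : ‖x - m‖ = r) (hc : (conj m * x).im = 0) :
    ∃ a : ℕ, ∀ᶠ t in 𝓝[≠] 0, signal m r (rot t x) = a := by
  refine ⟨if (conj m * x).re ≤ 0 then 1 else 0, ?_⟩
  have hsin : ∀ᶠ t in 𝓝[≠] (0 : ℝ), sin (t / 2) ≠ 0 := by
    rw [← nhdsLT_sup_nhdsGT, eventually_sup]
    exact ⟨eventually_sin_half_neg.mono fun _ => ne_of_lt,
      eventually_sin_half_pos.mono fun _ => ne_of_gt⟩
  filter_upwards [hsin] with t ht
  have := sq_pos_of_ne_zero ht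
  rw [signal_rot_of_norm_sub_eq h, hc]
  refine if_congr ?_ rfl rfl
  constructor <;> intro <;> nlinarith

lemma hasSideLim_signal (hl : l = 𝓝[>] 0 ∨ l = 𝓝[<] 0) : HasSideLim l (signal m r) x := by
  obtain ⟨_, hle⟩ := side_neBot_and_le_nhdsNE hl
  suffices ∃ a, ∀ᶠ t in l, signal m r (rot t x) = a from
    hasSideLim_of_eventually this.choose_spec
  by_cases hb : ‖x - m‖ = r
  · by_cases hc : (conj m * x).im = 0
    · obtain ⟨a, ha⟩ := signal_rot_tangent hb hc
      exact ⟨a, hle ha⟩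
    · obtain ⟨a, b, -, ha, hb⟩ := signal_rot_transverse hb hc
      rcases hl with rfl | rfl
      exacts [⟨a, ha⟩, ⟨b, hb⟩]
  · exact ⟨_, (hle.trans nhdsWithin_le_nhds) (eventually_signal_rot_eq_of_ne hb)⟩

lemma sideLim_signal_le (hl : l = 𝓝[>] 0 ∨ l = 𝓝[<] 0) :
    sideLim l (signal m r) x ≤ signal m r x := by
  obtain ⟨_, hle⟩ := side_neBot_and_le_nhdsNE hl
  by_cases hb : ‖x - m‖ = r
  · rw [show signal m r x = 1 by simp [signal, hb]]
    exact (hasSideLim_signal hl).sideLim_le (fun t => signal_le_one m r _)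
  · exact (sideLim_eq ((hle.trans nhdsWithin_le_nhds) (eventually_signal_rot_eq_of_ne hb))).le

lemma jump_signal_eq_zero_of_ne (h : ‖x - m‖ ≠ r) : jump (signal m r) x = 0 := by
  have := eventually_signal_rot_eq_of_ne h
  simp [jump, sideLim_eq (nhdsWithin_le_nhds (s := Ioi 0) this),
    sideLim_eq (nhdsWithin_le_nhds (s := Iio 0) this)]

lemma jump_signal_ne_zero (h : ‖x - m‖ = r) (hc : (conj m * x).im ≠ 0) :
    jump (signal m r) x ≠ 0 := by
  obtain ⟨a, b, hab, ha, hb⟩ := signal_rot_transverse h hc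
  rw [jump, sideLim_eq ha, sideLim_eq hb, sub_ne_zero]
  exact_mod_cast hab

lemma abs_jump_signal_le_one : |jump (signal m r) x| ≤ 1 := by
  have h₁ := (sideLim_signal_le (m := m) (r := r) (x := x) (Or.inl rfl)).trans (signal_le_one m r x)
  have h₂ := (sideLim_signal_le (m := m) (r := r) (x := x) (Or.inr rfl)).trans (signal_le_one m r x)
  rw [jump, abs_le]
  omega

end Signal

lemma S1_eq_sphere : S1 = Metric.sphere 0 1 := by
  ext y; simp [S1]

lemma isPreconnected_S1 : IsPreconnected S1 := by
  rw [S1_eq_sphere]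
  exact (isConnected_sphere (by simp) 0 zero_le_one).isPreconnected

lemma S1_infinite : S1.Infinite :=
  isPreconnected_S1.infinite_of_nontrivial ⟨1, by simp [S1], -1, by simp [S1], by norm_num⟩

section Trace

variable {m : ℂ} {r : ℝ} {x y : ℂ}

lemma re_conj_mul_and_sq_add_sq_of_mem_bTrace (hx : x ∈ bTrace m r) :
    (conj m * x).re = (1 + ‖m‖ ^ 2 - r ^ 2) / 2 ∧
      (conj m * x).re ^ 2 + (conj m * x).im ^ 2 = ‖m‖ ^ 2 := by
  obtain ⟨h₁, h₂⟩ := hx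
  have e₁ : x.re ^ 2 + x.im ^ 2 = 1 := by
    have := congrArg (· ^ 2) h₁; simpa [Complex.sq_norm, Complex.normSq_apply, ← sq] using this
  have e₂ := congrArg (· ^ 2) h₂
  simp only [Complex.sq_norm, Complex.normSq_apply, Complex.sub_re, Complex.sub_im] at e₂ ⊢
  simp only [Complex.mul_re, Complex.mul_im, Complex.conj_re, Complex.conj_im]
  constructor
  · linear_combination e₁ / 2 - e₂ / 2
  · linear_combination (m.re * m.re + m.im * m.im) * e₁

lemma conj_mul_eq_or_eq_conj_of_mem_bTrace (hx : x ∈ bTrace m r) (hy : y ∈ bTrace m r) :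
    conj m * y = conj m * x ∨ conj m * y = conj (conj m * x) := by
  obtain ⟨hx₁, hx₂⟩ := re_conj_mul_and_sq_add_sq_of_mem_bTrace hx
  obtain ⟨hy₁, hy₂⟩ := re_conj_mul_and_sq_add_sq_of_mem_bTrace hy
  have hre : (conj m * y).re = (conj m * x).re := hy₁.trans hx₁.symm
  rcases sq_eq_sq_iff_eq_or_eq_neg.1 (show (conj m * y).im ^ 2 = (conj m * x).im ^ 2 by
    rw [hre] at hy₂; linarith) with him | him
  · exact Or.inl (Complex.ext hre him)
  · refine Or.inr (Complex.ext (by simpa using hre) ?_)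
    simp only [Complex.mul_im, Complex.conj_re, Complex.conj_im] at him ⊢
    linarith

lemma bTrace_subset_pair (hm : m ≠ 0) (hx : x ∈ bTrace m r) :
    bTrace m r ⊆ {x, conj (conj m * x) / conj m} := by
  have hm' : conj m ≠ 0 := (map_ne_zero _).2 hm
  intro y hy
  rcases conj_mul_eq_or_eq_conj_of_mem_bTrace hx hy with h | h
  · exact Or.inl (mul_left_cancel₀ hm' h)
  · exact Or.inr (by rw [mem_singleton_iff, eq_div_iff hm', mul_comm, h])

lemma im_conj_mul_ne_zero_of_ncard_eq_two (h : (bTrace m r).ncard = 2) (hx : x ∈ bTrace m r) :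
    (conj m * x).im ≠ 0 := by
  intro hc
  by_cases hm : m = 0
  · subst hm
    have hr : r = 1 := by simpa [hx.1] using hx.2.symm
    have hS : bTrace 0 r = S1 := by
      ext y; simp [bTrace, S1, hr]
    rw [hS, S1_infinite.ncard] at h
    omega
  · have hsub : bTrace m r ⊆ {x} := by
      simpa [Complex.conj_eq_iff_im.2 hc, (map_ne_zero _).2 hm] using bTrace_subset_pair hm hx
    have := ncard_le_ncard hsub
    simp only [ncard_singleton] at this
    omega

lemma bTrace_nonempty (hmeet : ({y : ℂ | ‖y - m‖ ≤ r} ∩ S1).Nonempty)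
    (hout : ¬ S1 ⊆ {y : ℂ | ‖y - m‖ ≤ r}) : (bTrace m r).Nonempty := by
  obtain ⟨p, hp, hpS⟩ := hmeet
  obtain ⟨q, hqS, hq⟩ := not_subset.1 hout
  obtain ⟨y, hyS, hy⟩ := isPreconnected_S1.intermediate_value hpS hqS
    (continuous_id.sub continuous_const).norm.continuousOn ⟨hp, le_of_not_ge hq⟩
  exact ⟨y, hyS, hy⟩

end Trace

section JumpSet

variable {m : ℂ} {r : ℝ}

lemma jumpSet_signal_subset_bTrace : jumpSet (signal m r) ⊆ bTrace m r :=
  fun _ hx => ⟨hx.1, by_contra fun h => hx.2 (jump_signal_eq_zero_of_ne h)⟩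

lemma jumpSet_signal_eq_empty_of_subset (h : S1 ⊆ {y : ℂ | ‖y - m‖ ≤ r}) :
    jumpSet (signal m r) = ∅ :=
  eq_empty_of_forall_notMem fun x hx => hx.2 <| jump_eq_zero_of_rot_eq fun t => by
    simp [signal, show ‖rot t x - m‖ ≤ r from h (rot_mem_S1 hx.1 t), show ‖x - m‖ ≤ r from h hx.1]

lemma jumpSet_signal_zero_eq_empty : jumpSet (signal 0 r) = ∅ :=
  eq_empty_of_forall_notMem fun _ hx => hx.2 <| jump_eq_zero_of_rot_eq fun t => by
    simp [signal, norm_rot]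

lemma jumpSet_signal_eq_bTrace (h : (bTrace m r).ncard = 2) : jumpSet (signal m r) = bTrace m r :=
  jumpSet_signal_subset_bTrace.antisymm fun _ hx =>
    ⟨hx.1, jump_signal_ne_zero hx.2 (im_conj_mul_ne_zero_of_ncard_eq_two h hx)⟩

lemma exists_jumpSet_signal_subset_pair : ∃ p q : ℂ, jumpSet (signal m r) ⊆ {p, q} := by
  by_cases hm : m = 0
  · subst hm
    exact ⟨0, 0, by simp [jumpSet_signal_zero_eq_empty]⟩
  rcases (bTrace m r).eq_empty_or_nonempty with h | ⟨x, hx⟩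
  · exact ⟨0, 0, fun y hy => by simpa [h] using jumpSet_signal_subset_bTrace hy⟩
  · exact ⟨_, _, jumpSet_signal_subset_bTrace.trans (bTrace_subset_pair hm hx)⟩

lemma jumpSet_signal_finite : (jumpSet (signal m r)).Finite := by
  obtain ⟨p, q, h⟩ := exists_jumpSet_signal_subset_pair (m := m) (r := r)
  exact (toFinite _).subset h

lemma ncard_jumpSet_signal_le :
    (jumpSet (signal m r)).ncard ≤ if S1 ⊆ {y : ℂ | ‖y - m‖ ≤ r} then 0 else 2 := by
  split_ifs with hb
  · simp [jumpSet_signal_eq_empty_of_subset hb]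
  · obtain ⟨p, q, h⟩ := exists_jumpSet_signal_subset_pair (m := m) (r := r)
    exact (ncard_le_ncard h).trans ((ncard_insert_le _ _).trans (by simp))

lemma ncard_jumpSet_signal_eq (hcard : bTrace m r = ∅ ∨ (bTrace m r).ncard = 2)
    (hmeet : ({y : ℂ | ‖y - m‖ ≤ r} ∩ S1).Nonempty) :
    (jumpSet (signal m r)).ncard = if S1 ⊆ {y : ℂ | ‖y - m‖ ≤ r} then 0 else 2 := by
  split_ifs with hb
  · simp [jumpSet_signal_eq_empty_of_subset hb]
  · rcases hcard with h | h
    · exact absurd h (bTrace_nonempty hmeet hb).ne_empty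
    · rw [jumpSet_signal_eq_bTrace h, h]

lemma sum_abs_jump_signal_eq_ncard {T : Finset ℂ} (hTS : ↑T ⊆ S1)
    (hT : jumpSet (signal m r) ⊆ T) :
    ∑ x ∈ T, |jump (signal m r) x| = (jumpSet (signal m r)).ncard := by
  have hind : ∀ x ∈ T, |jump (signal m r) x| = if x ∈ jumpSet (signal m r) then 1 else 0 := by
    intro x hx
    split_ifs with h
    · have h₁ := abs_jump_signal_le_one (m := m) (r := r) (x := x)
      have h₂ := abs_pos.2 h.2
      omega
    · simpa [jumpSet, hTS hx] using h
  have hfilter : jumpSet (signal m r) = ↑(T.filter (· ∈ jumpSet (signal m r))) := by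
    ext x; simpa using fun hx => hT hx
  rw [Finset.sum_congr rfl hind, Finset.sum_boole, ← ncard_coe_finset, ← hfilter]

lemma exists_finset_jumpSet_subset {ι : Type*} [Finite ι] (p : ι → ℂ × ℝ) :
    ∃ T : Finset ℂ, ↑T ⊆ S1 ∧ ∀ i, jumpSet (signal (p i).1 (p i).2) ⊆ T := by
  have hfin := finite_iUnion fun i => jumpSet_signal_finite (m := (p i).1) (r := (p i).2)
  refine ⟨hfin.toFinset, ?_, fun i => ?_⟩
  · intro x hx
    obtain ⟨i, hi⟩ := mem_iUnion.1 (hfin.mem_toFinset.1 hx)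
    exact hi.1
  · intro x hx
    exact hfin.mem_toFinset.2 (mem_iUnion.2 ⟨i, hx⟩)

end JumpSet

section Hsum

variable {n : ℕ} {l : Filter ℝ} {x : ℂ}

lemma eventually_Hsum_rot_eq (hl : l = 𝓝[>] 0 ∨ l = 𝓝[<] 0) (v : Fin n → ℂ × ℝ) :
    ∀ᶠ t in l, Hsum v (rot t x) = ∑ i, sideLim l (signal (v i).1 (v i).2) x :=
  (Finset.univ.eventually_all.2 fun _ _ => hasSideLim_signal hl).mono fun _ ht =>
    Finset.sum_congr rfl ht

lemma sideLim_Hsum (hl : l = 𝓝[>] 0 ∨ l = 𝓝[<] 0) (v : Fin n → ℂ × ℝ) :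
    sideLim l (Hsum v) x = ∑ i, sideLim l (signal (v i).1 (v i).2) x :=
  have := (side_neBot_and_le_nhdsNE hl).1
  sideLim_eq (eventually_Hsum_rot_eq hl v)

lemma hasSideLim_Hsum (hl : l = 𝓝[>] 0 ∨ l = 𝓝[<] 0) (v : Fin n → ℂ × ℝ) :
    HasSideLim l (Hsum v) x :=
  have := (side_neBot_and_le_nhdsNE hl).1
  hasSideLim_of_eventually (eventually_Hsum_rot_eq hl v)

lemma jump_Hsum (v : Fin n → ℂ × ℝ) (x : ℂ) :
    jump (Hsum v) x = ∑ i, jump (signal (v i).1 (v i).2) x := by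
  simp only [jump, sideLim_Hsum (Or.inl rfl), sideLim_Hsum (Or.inr rfl), Nat.cast_sum,
    Finset.sum_sub_distrib]

lemma jump_Hsum_eq_of_finite {n' : ℕ} {v : Fin n → ℂ × ℝ} {w : Fin n' → ℂ × ℝ}
    (hvw : {y ∈ S1 | Hsum v y ≠ Hsum w y}.Finite) (hx : x ∈ S1) :
    jump (Hsum v) x = jump (Hsum w) x := by
  have hx0 : x ≠ 0 := by rintro rfl; simp [S1] at hx
  have h : ∀ᶠ t in 𝓝[≠] 0, Hsum v (rot t x) = Hsum w (rot t x) :=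
    (eventually_rot_notMem hvw hx0).mono fun t ht => by_contra fun hne => ht ⟨rot_mem_S1 hx t, hne⟩
  have hR := (hasSideLim_Hsum (x := x) (Or.inl rfl) w).sideLim_congr
    ((side_neBot_and_le_nhdsNE (Or.inl rfl)).2 h)
  have hL := (hasSideLim_Hsum (x := x) (Or.inr rfl) w).sideLim_congr
    ((side_neBot_and_le_nhdsNE (Or.inr rfl)).2 h)
  rw [jump, jump, hR, hL]

lemma le_or_ge_of_sum_eq_max {ι : Type*} [Fintype ι] {a b c : ι → ℕ} (ha : ∀ i, a i ≤ c i)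
    (hb : ∀ i, b i ≤ c i) (h : ∑ i, c i = max (∑ i, a i) (∑ i, b i)) :
    (∀ i, b i ≤ a i) ∨ ∀ i, a i ≤ b i := by
  rcases max_choice (∑ i, a i) (∑ i, b i) with hm | hm <;> rw [hm] at h
  · have := (Finset.sum_eq_sum_iff_of_le fun i _ => ha i).1 h.symm
    exact Or.inl fun i => (this i (Finset.mem_univ i)).symm ▸ hb i
  · have := (Finset.sum_eq_sum_iff_of_le fun i _ => hb i).1 h.symm
    exact Or.inr fun i => (this i (Finset.mem_univ i)).symm ▸ ha i

lemma jump_signal_nonneg_or_nonpos_of_properlyUSC {w : Fin n → ℂ × ℝ}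
    (husc : ProperlyUSC (Hsum w)) (hx : x ∈ S1) :
    (∀ j, 0 ≤ jump (signal (w j).1 (w j).2) x) ∨ ∀ j, jump (signal (w j).1 (w j).2) x ≤ 0 := by
  obtain ⟨a, b, ha, hb, hmax⟩ := husc x hx
  rw [rightVal_iff] at ha
  rw [leftVal_iff] at hb
  rw [← sideLim_eq ha, ← sideLim_eq hb, sideLim_Hsum (Or.inl rfl), sideLim_Hsum (Or.inr rfl)]
    at hmax
  rcases le_or_ge_of_sum_eq_max (fun j => sideLim_signal_le (Or.inl rfl))
    (fun j => sideLim_signal_le (Or.inr rfl)) hmax with h | h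
  · exact Or.inl fun j => sub_nonneg.2 (by exact_mod_cast h j)
  · exact Or.inr fun j => sub_nonpos.2 (by exact_mod_cast h j)

end Hsum

lemma sum_sum_abs_le_of_nonneg_or_nonpos {α ι κ : Type*} [Fintype ι] [Fintype κ] (T : Finset α)
    (f : ι → α → ℤ) (g : κ → α → ℤ) (hfg : ∀ x ∈ T, ∑ i, f i x = ∑ k, g k x)
    (hf : ∀ x ∈ T, (∀ i, 0 ≤ f i x) ∨ ∀ i, f i x ≤ 0) :
    ∑ i, ∑ x ∈ T, |f i x| ≤ ∑ k, ∑ x ∈ T, |g k x| := by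
  have habs : ∀ x ∈ T, ∑ i, |f i x| = |∑ i, f i x| := by
    intro x hx
    rcases hf x hx with h | h
    · rw [Finset.abs_sum_of_nonneg fun i _ => h i]
      exact Finset.sum_congr rfl fun i _ => abs_of_nonneg (h i)
    · rw [← abs_neg, ← Finset.sum_neg_distrib,
        Finset.abs_sum_of_nonneg fun i _ => neg_nonneg.2 (h i)]
      exact Finset.sum_congr rfl fun i _ => abs_of_nonpos (h i)
  calc ∑ i, ∑ x ∈ T, |f i x| = ∑ x ∈ T, |∑ k, g k x| := by
        rw [Finset.sum_comm]
        exact Finset.sum_congr rfl fun x hx => (habs x hx).trans (by rw [hfg x hx])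
    _ ≤ ∑ x ∈ T, ∑ k, |g k x| := Finset.sum_le_sum fun x _ => Finset.abs_sum_le_sum_abs _ _
    _ = ∑ k, ∑ x ∈ T, |g k x| := Finset.sum_comm

lemma sum_ite_add_two_mul_card {ι : Type*} [Fintype ι] (p : ι → Prop) :
    ∑ i, (if p i then 0 else 2) + 2 * Nat.card {i // p i} = 2 * Fintype.card ι := by
  rw [Nat.card_eq_fintype_card, Fintype.card_subtype, Finset.card_filter, Finset.mul_sum,
    ← Finset.sum_add_distrib, Finset.sum_congr rfl fun i _ => show _ = 2 by split_ifs <;> rfl]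
  simp [mul_comm]

lemma sum_ncard_jumpSet_le {m n : ℕ} {w : Fin m → ℂ × ℝ} {v : Fin n → ℂ × ℝ}
    (hjump : ∀ x ∈ S1, jump (Hsum w) x = jump (Hsum v) x)
    (hsign : ∀ x ∈ S1,
      (∀ j, 0 ≤ jump (signal (w j).1 (w j).2) x) ∨ ∀ j, jump (signal (w j).1 (w j).2) x ≤ 0) :
    ∑ j, (jumpSet (signal (w j).1 (w j).2)).ncard ≤
      ∑ i, (jumpSet (signal (v i).1 (v i).2)).ncard := by
  obtain ⟨Tw, hTwS, hTw⟩ := exists_finset_jumpSet_subset w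
  obtain ⟨Tv, hTvS, hTv⟩ := exists_finset_jumpSet_subset v
  have hTS : ↑(Tw ∪ Tv) ⊆ S1 := by rw [Finset.coe_union]; exact union_subset hTwS hTvS
  have key := sum_sum_abs_le_of_nonneg_or_nonpos (Tw ∪ Tv)
    (fun j => jump (signal (w j).1 (w j).2)) (fun i => jump (signal (v i).1 (v i).2))
    (fun x hx => by rw [← jump_Hsum, ← jump_Hsum, hjump x (hTS hx)]) (fun x hx => hsign x (hTS hx))
  simp only [sum_abs_jump_signal_eq_ncard hTS ((hTw _).trans (by simp)),
    sum_abs_jump_signal_eq_ncard hTS ((hTv _).trans (by simp))] at key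
  exact_mod_cast key

theorem stmt16_general {n m : ℕ} (f : ℂ → ℕ) (v : Fin n → ℂ × ℝ) (w : Fin m → ℂ × ℝ)
    (hv : {x ∈ S1 | Hsum v x ≠ f x}.Finite)
    (hw : {x ∈ S1 | Hsum w x ≠ f x}.Finite)
    (husc : ProperlyUSC (Hsum w))
    (hcard : ∀ j : Fin m,
      bTrace (w j).1 (w j).2 = ∅ ∨ (bTrace (w j).1 (w j).2).ncard = 2)
    (hbase : Nat.card {j : Fin m // S1 ⊆ {y : ℂ | ‖y - (w j).1‖ ≤ (w j).2}}
           = Nat.card {i : Fin n // S1 ⊆ {y : ℂ | ‖y - (v i).1‖ ≤ (v i).2}})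
    (hmeet : ∀ j : Fin m, ({y : ℂ | ‖y - (w j).1‖ ≤ (w j).2} ∩ S1).Nonempty) :
    m ≤ n := by
  have hwv : {x ∈ S1 | Hsum w x ≠ Hsum v x}.Finite :=
    (hw.union hv).subset fun x ⟨hx, hne⟩ => by
      by_cases h : Hsum w x = f x
      exacts [Or.inr ⟨hx, by rwa [← h, ne_comm]⟩, Or.inl ⟨hx, h⟩]
  have hle := sum_ncard_jumpSet_le (fun x hx => jump_Hsum_eq_of_finite hwv hx)
    (fun x hx => jump_signal_nonneg_or_nonpos_of_properlyUSC husc hx)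
  have hW : ∑ j, (jumpSet (signal (w j).1 (w j).2)).ncard = _ :=
    Finset.sum_congr rfl fun j _ => ncard_jumpSet_signal_eq (hcard j) (hmeet j)
  have hV : ∑ i, (jumpSet (signal (v i).1 (v i).2)).ncard ≤ _ :=
    Finset.sum_le_sum fun i _ => ncard_jumpSet_signal_le (m := (v i).1) (r := (v i).2)
  have hcw := sum_ite_add_two_mul_card fun j => S1 ⊆ {y : ℂ | ‖y - (w j).1‖ ≤ (w j).2}
  have hcv := sum_ite_add_two_mul_card fun i => S1 ⊆ {y : ℂ | ‖y - (v i).1‖ ≤ (v i).2}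
  simp only [Fintype.card_fin] at hcw hcv
  omega

/-- a DoF-maximizing decomposition `w` of `f` (properly u.s.c., all
boundary traces with exactly 0 or 2 elements) using the same number of disks
containing `S¹` as another decomposition `v` of `f`, and with every disk meeting
`S¹`, uses no more signals than `v`. -/
theorem stmt16 {n m : ℕ} (f : ℂ → ℕ) (v : Fin n → ℂ × ℝ) (w : Fin m → ℂ × ℝ)
    (hrv : ∀ i, 0 < (v i).2) (hrw : ∀ j, 0 < (w j).2)
    (hv : {x ∈ S1 | Hsum v x ≠ f x}.Finite)
    (hw : {x ∈ S1 | Hsum w x ≠ f x}.Finite)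
    (husc : ProperlyUSC (Hsum w))
    (hcard : ∀ j : Fin m,
      bTrace (w j).1 (w j).2 = ∅ ∨ (bTrace (w j).1 (w j).2).ncard = 2)
    (hbase : Nat.card {j : Fin m // S1 ⊆ {y : ℂ | ‖y - (w j).1‖ ≤ (w j).2}}
           = Nat.card {i : Fin n // S1 ⊆ {y : ℂ | ‖y - (v i).1‖ ≤ (v i).2}})
    (hmeet : ∀ j : Fin m, ({y : ℂ | ‖y - (w j).1‖ ≤ (w j).2} ∩ S1).Nonempty) :
    m ≤ n :=
  stmt16_general f v w hv hw husc hcard hbase hmeet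
end
end

section
/- Let v = ((m_1,r_1),…,(m_n,r_n)) with all r_i > 0 be such that the sum H_v : S¹ → ℕ is properly upper semicontinuous, every boundary trace ∂h_{(m_i,r_i)} has exactly 0 or exactly 2 elements, and every disk meets the circle (i.e., {y : ‖y − m_i‖ ≤ r_i} ∩ S¹ ≠ ∅ for each i). Then max(H_v*, H_v* − H_{v*} + τ(H_v)) ≤ n ≤ H_v* + τ(H_v), where H_v* = max H_v and H_{v*} = min H_v. -/
noncomputable section

open scoped BigOperators
open Classical

/-!
Each disk meets the circle in a closed arc, possibly the whole circle. Parametrize the circle by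
angle and cut it open at a point where `H_v` is minimal. For a level `k` above the minimum the
superlevel set `{H_v ≥ k}` becomes a compact subset of an interval, and its components correspond
to their left endpoints: the points `x` with `H_v(x⁻) < k ≤ H_v(x)`. Since `H_v(x) - H_v(x⁻)` is
the number of arcs starting at `x`, summing the component counts over all levels counts every
proper arc once, so `H_v* - H_{v*} + τ(H_v)` is the number of proper arcs. The disks containing
the whole circle number at most `H_{v*}`, and both inequalities follow.
-/

open Real Filter Topology Set

section ComponentsOnTheLine

theorem ConnectedComponents.mk_eq_mk_iff_mem_connectedComponentIn {α : Type*}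
    [TopologicalSpace α] {F : Set α} {x y : α} (hx : x ∈ F) (hy : y ∈ F) :
    (ConnectedComponents.mk ⟨x, hx⟩ : ConnectedComponents F) = .mk ⟨y, hy⟩ ↔
      x ∈ connectedComponentIn F y := by
  rw [ConnectedComponents.coe_eq_coe', connectedComponentIn_eq_image hy]
  exact Subtype.val_injective.mem_set_image.symm

theorem Homeomorph.natCard_connectedComponents {X Y : Type*} [TopologicalSpace X]
    [TopologicalSpace Y] (h : X ≃ₜ Y) :
    Nat.card (ConnectedComponents X) = Nat.card (ConnectedComponents Y) :=
  Nat.card_congr (h.isQuotientMap.isCoinducing.connectedComponentsHomeomorph fun y => by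
    simpa [← h.image_symm] using isConnected_singleton).toEquiv

theorem IsClosed.connectedComponentIn {α : Type*} [TopologicalSpace α] {F : Set α}
    (hF : IsClosed F) (x : α) : IsClosed (connectedComponentIn F x) := by
  by_cases hx : x ∈ F
  · refine closure_subset_iff_isClosed.1 <|
      isPreconnected_connectedComponentIn.closure.subset_connectedComponentIn
        (subset_closure (mem_connectedComponentIn hx)) ?_
    exact hF.closure_subset_iff.2 (connectedComponentIn_subset F x)
  · simp [connectedComponentIn_eq_empty hx]

def leftEndpoints (A : Set ℝ) : Set ℝ := {a ∈ A | ∀ᶠ t in 𝓝[<] a, t ∉ A}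

theorem notMem_leftEndpoints_of_Icc_subset {A : Set ℝ} {a b : ℝ} (hab : a < b)
    (h : Icc a b ⊆ A) : b ∉ leftEndpoints A := fun hb =>
  have ⟨_, ht, htA⟩ := ((show ∀ᶠ t in 𝓝[<] b, t ∈ Ioo a b from Ioo_mem_nhdsLT hab).and hb.2).exists
  htA (h (Ioo_subset_Icc_self ht))

theorem leftEndpoints_nonempty {A : Set ℝ} (hA : IsCompact A) (hne : A.Nonempty) :
    (leftEndpoints A).Nonempty :=
  ⟨sInf A, hA.sInf_mem hne,
    eventually_nhdsWithin_of_forall fun _ hs => notMem_of_lt_csInf hs hA.bddBelow⟩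

/-- The infimum of a component is its unique left endpoint. -/
theorem natCard_connectedComponents_eq_natCard_leftEndpoints {A : Set ℝ} (hA : IsCompact A)
    (hgerm : ∀ a ∈ A, (∀ᶠ t in 𝓝[<] a, t ∈ A) ∨ ∀ᶠ t in 𝓝[<] a, t ∉ A) :
    Nat.card (ConnectedComponents A) = Nat.card (leftEndpoints A) := by
  let f : leftEndpoints A → ConnectedComponents A := fun a => .mk ⟨a, a.2.1⟩
  refine (Nat.card_congr (Equiv.ofBijective f ⟨fun a b hab => ?_, fun C => ?_⟩)).symm
  · have key : ∀ a b : leftEndpoints A, f a = f b → (a : ℝ) ≤ b := by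
      intro a b hab
      by_contra! hba
      have hb := (ConnectedComponents.mk_eq_mk_iff_mem_connectedComponentIn _ _).1 hab.symm
      exact notMem_leftEndpoints_of_Icc_subset hba
        ((isPreconnected_connectedComponentIn.Icc_subset hb
          (mem_connectedComponentIn a.2.1)).trans (connectedComponentIn_subset _ _)) a.2
    exact Subtype.ext ((key a b hab).antisymm (key b a hab.symm))
  · obtain ⟨⟨t, ht⟩, rfl⟩ := ConnectedComponents.surjective_coe C
    set K := connectedComponentIn A t
    have hKA : K ⊆ A := connectedComponentIn_subset A t
    have hKbdd : BddBelow K := hA.bddBelow.mono hKA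
    have hs : sInf K ∈ K := (hA.isClosed.connectedComponentIn t).csInf_mem
      ⟨t, mem_connectedComponentIn ht⟩ hKbdd
    refine ⟨⟨sInf K, hKA hs, (hgerm _ (hKA hs)).resolve_left fun hleft => ?_⟩,
      (ConnectedComponents.mk_eq_mk_iff_mem_connectedComponentIn _ _).2 hs⟩
    obtain ⟨u, hu : u < sInf K, huA⟩ := mem_nhdsLT_iff_exists_Ioo_subset.1 hleft
    have hIoc : Ioc u (sInf K) ⊆ K := by
      refine (isPreconnected_Ioc.subset_connectedComponentIn (right_mem_Ioc.2 hu)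
        fun x hx => ?_).trans (connectedComponentIn_eq hs).symm.subset
      rcases hx.2.eq_or_lt with rfl | hlt
      · exact hKA hs
      · exact huA ⟨hx.1, hlt⟩
    have hmid := csInf_le hKbdd (hIoc ⟨left_lt_add_div_two.2 hu, (add_div_two_lt_right.2 hu).le⟩)
    linarith [add_div_two_lt_right.2 hu]

end ComponentsOnTheLine

section LeftLimits

variable {G L : ℝ → ℕ} {a b : ℝ} {k : ℕ}

theorem eventually_mem_superlevel_iff (hGL : ∀ t, ∀ᶠ s in 𝓝[<] t, G s = L t) (ha : G a < k)
    {θ : ℝ} (hθ : θ ∈ {t ∈ Icc a b | k ≤ G t}) :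
    ∀ᶠ s in 𝓝[<] θ, (s ∈ {t ∈ Icc a b | k ≤ G t} ↔ k ≤ L θ) := by
  have haθ : a < θ := hθ.1.1.lt_of_ne (by rintro rfl; exact ha.not_ge hθ.2)
  filter_upwards [hGL θ, Ioo_mem_nhdsLT haθ] with s hs hsI
  rw [hs, and_iff_right ⟨hsI.1.le, hsI.2.le.trans hθ.1.2⟩]

theorem leftEndpoints_superlevel (hGL : ∀ t, ∀ᶠ s in 𝓝[<] t, G s = L t) (ha : G a < k) :
    leftEndpoints {t ∈ Icc a b | k ≤ G t} = {t ∈ Icc a b | L t < k ∧ k ≤ G t} := by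
  ext θ
  refine ⟨fun ⟨hθ, hleft⟩ => ?_, fun ⟨hθI, hL, hk⟩ => ?_⟩
  · have := (eventually_congr ((eventually_mem_superlevel_iff hGL ha hθ).mono
      fun _ hs => hs.not)).1 hleft
    exact ⟨hθ.1, not_le.1 (eventually_const.1 this), hθ.2⟩
  · exact ⟨⟨hθI, hk⟩, (eventually_mem_superlevel_iff hGL ha ⟨hθI, hk⟩).mono
      fun _ hs => hs.not.2 hL.not_ge⟩

theorem natCard_connectedComponents_superlevel (hGL : ∀ t, ∀ᶠ s in 𝓝[<] t, G s = L t)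
    (hG : IsClosed {t | k ≤ G t}) (ha : G a < k) :
    Nat.card (ConnectedComponents {t ∈ Icc a b | k ≤ G t}) =
      Nat.card {t ∈ Icc a b | L t < k ∧ k ≤ G t} := by
  rw [natCard_connectedComponents_eq_natCard_leftEndpoints
    (show IsCompact {t ∈ Icc a b | k ≤ G t} from isCompact_Icc.inter_right hG),
    leftEndpoints_superlevel hGL ha]
  intro θ hθ
  by_cases hkL : k ≤ L θ
  · exact .inl ((eventually_mem_superlevel_iff hGL ha hθ).mono fun _ hs => hs.2 hkL)
  · exact .inr ((eventually_mem_superlevel_iff hGL ha hθ).mono fun _ hs => hs.not.2 hkL)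

end LeftLimits

open Finset in
theorem sum_card_filter_lt_and_le_eq_sum_sub {α : Type*} (J : Finset α) (G L : α → ℕ)
    {m M : ℕ} (hLG : ∀ θ ∈ J, m ≤ L θ ∧ G θ ≤ M) :
    ∑ k ∈ Icc (m + 1) M, #{θ ∈ J | L θ < k ∧ k ≤ G θ} = ∑ θ ∈ J, (G θ - L θ) := by
  simp_rw [card_filter]
  rw [sum_comm]
  refine sum_congr rfl fun θ hθ => ?_
  rw [← card_filter, show G θ - L θ = G θ + 1 - (L θ + 1) by omega, ← Nat.card_Icc]
  congr 1
  ext k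
  simp only [mem_filter, Finset.mem_Icc]
  have := hLG θ hθ
  omega

open Finset in
theorem isClosed_setOf_le_card_filter_mem {X ι : Type*} [TopologicalSpace X] [Fintype ι]
    {C : ι → Set X} (hC : ∀ i, IsClosed (C i)) (k : ℕ) :
    IsClosed {x | k ≤ #{i | x ∈ C i}} := by
  have hsum : (fun x => #{i | x ∈ C i}) = fun x => ∑ i, (C i).indicator 1 x := by
    ext x
    simp only [card_filter, indicator_apply, Pi.one_apply]
  rw [← preimage_ofPred_eq (p := (k ≤ ·)), hsum]
  exact (upperSemicontinuous_sum fun i _ => (hC i).upperSemicontinuous_indicator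
    zero_le_one).isClosed_preimage k

section CircleByAngle

theorem rot_one (t : ℝ) : rot t 1 = Complex.exp (t * Complex.I) := mul_one _

theorem continuous_rot_one : Continuous fun t : ℝ => rot t 1 := by
  simp only [rot_one]
  fun_prop

theorem rot_one_mem_S1 (t : ℝ) : rot t 1 ∈ S1 := by
  simp [S1, rot_one, Complex.norm_exp_ofReal_mul_I]

theorem rot_one_eq_rot_one_iff {s t : ℝ} : rot s 1 = rot t 1 ↔ (s : Real.Angle) = t := by
  rw [rot_one, rot_one, Complex.exp_eq_exp_iff_exists_int, Real.Angle.angle_eq_iff_two_pi_dvd_sub]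
  refine exists_congr fun k => ⟨fun h => ?_, fun h => ?_⟩
  · have := congrArg Complex.im h
    simp at this
    linarith
  · rw [sub_eq_iff_eq_add] at h
    rw [h]
    push_cast
    ring

theorem rot_one_arg {x : ℂ} (hx : x ∈ S1) : rot (Complex.arg x) 1 = x := by
  simpa [rot_one, show ‖x‖ = 1 from hx] using Complex.norm_mul_exp_arg_mul_I x

theorem image_S1_eq_range (H : ℂ → ℕ) : H '' S1 = range fun t => H (rot t 1) := by
  ext y
  constructor
  · rintro ⟨x, hx, rfl⟩
    exact ⟨Complex.arg x, congrArg H (rot_one_arg hx)⟩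
  · rintro ⟨t, rfl⟩
    exact ⟨_, rot_one_mem_S1 t, rfl⟩

theorem natCard_connectedComponents_lift {B : Set ℂ} (hB : IsClosed B) (hBS : B ⊆ S1)
    {a : ℝ} (ha : rot a 1 ∉ B) :
    Nat.card (ConnectedComponents B) =
      Nat.card (ConnectedComponents {θ ∈ Icc a (a + 2 * π) | rot θ 1 ∈ B}) := by
  set A := {θ ∈ Icc a (a + 2 * π) | rot θ 1 ∈ B}
  have : Fact (0 < 2 * π) := ⟨two_pi_pos⟩
  have hAIco : A ⊆ Ico a (a + 2 * π) := fun θ hθ => ⟨hθ.1.1, hθ.1.2.lt_of_ne fun h => ha <| by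
    rw [rot_one_eq_rot_one_iff.2 (show (a : Real.Angle) = θ by
      rw [h, Real.Angle.coe_add, Real.Angle.coe_two_pi, add_zero])]
    exact hθ.2⟩
  have : CompactSpace A := isCompact_iff_compactSpace.1
    (isCompact_Icc.inter_right (hB.preimage continuous_rot_one))
  let g : A → B := fun θ => ⟨rot θ 1, θ.2.2⟩
  have hg : Continuous g := (continuous_rot_one.comp continuous_subtype_val).subtype_mk _
  have hbij : Function.Bijective g := by
    refine ⟨fun θ₁ θ₂ h => Subtype.ext ?_, fun ⟨x, hx⟩ => ?_⟩
    · exact (AddCircle.coe_eq_coe_iff_of_mem_Ico (hAIco θ₁.2) (hAIco θ₂.2)).1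
        (rot_one_eq_rot_one_iff.1 (congrArg Subtype.val h))
    · have hθ : rot (toIcoMod two_pi_pos a (Complex.arg x)) 1 = x := by
        rw [rot_one_eq_rot_one_iff.2 (Real.Angle.coe_toIcoMod _ _), rot_one_arg (hBS hx)]
      exact ⟨⟨toIcoMod two_pi_pos a (Complex.arg x), Ico_subset_Icc_self (toIcoMod_mem_Ico _ _ _),
        by rwa [hθ]⟩, Subtype.ext hθ⟩
  exact (hg.homeoOfEquivCompactToT2 (f := Equiv.ofBijective g hbij)).natCard_connectedComponents.symm

theorem numCC_superlevel_eq {H : ℂ → ℕ} {G : ℝ → ℕ} (hHG : ∀ t, H (rot t 1) = G t) {k : ℕ}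
    (hH : IsClosed {x | k ≤ H x}) {a : ℝ} (ha : G a < k) :
    numCC (superlevel H k) =
      Nat.card (ConnectedComponents {t ∈ Icc a (a + 2 * π) | k ≤ G t}) := by
  have hS1 : IsClosed S1 := isClosed_eq continuous_norm continuous_const
  have hset : {t ∈ Icc a (a + 2 * π) | rot t 1 ∈ superlevel H k} =
      {t ∈ Icc a (a + 2 * π) | k ≤ G t} := by
    ext t
    simp [superlevel, rot_one_mem_S1, hHG]
  rw [numCC, natCard_connectedComponents_lift (B := superlevel H k) (hS1.inter hH)
    (fun x hx => hx.1) (fun h => ha.not_ge (hHG a ▸ h.2)), hset]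

end CircleByAngle

section Angles

theorem Real.Angle.coe_eq_coe_iff_eq_toIcoMod {a θ γ : ℝ} (hθ : θ ∈ Ico a (a + 2 * π)) :
    (θ : Real.Angle) = γ ↔ θ = toIcoMod two_pi_pos a γ := by
  have : Fact (0 < 2 * π) := ⟨two_pi_pos⟩
  rw [← Real.Angle.coe_toIcoMod γ a]
  exact AddCircle.coe_eq_coe_iff_of_mem_Ico hθ (toIcoMod_mem_Ico _ _ _)

def angleFrom (β t : ℝ) : ℝ := ((t : Real.Angle) - β).toReal

theorem angleFrom_mem_Ioc (β t : ℝ) : angleFrom β t ∈ Ioc (-π) π :=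
  ⟨Real.Angle.neg_pi_lt_toReal _, Real.Angle.toReal_le_pi _⟩

theorem angleFrom_congr {β s t : ℝ} (h : (s : Real.Angle) = t) :
    angleFrom β s = angleFrom β t := by
  rw [angleFrom, angleFrom, h]

theorem angleFrom_eq_iff {β t y : ℝ} (hy : y ∈ Ioc (-π) π) :
    angleFrom β t = y ↔ (t : Real.Angle) = (β + y : ℝ) := by
  conv_lhs => rw [angleFrom, ← Real.Angle.toReal_coe_eq_self_iff.2 hy, Real.Angle.toReal_inj]
  rw [Real.Angle.coe_add, sub_eq_iff_eq_add']

theorem le_cos_iff_abs_angleFrom_le {u : ℝ} (hu : u ≤ 1) (β t : ℝ) :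
    u ≤ cos (t - β) ↔ |angleFrom β t| ≤ arccos u := by
  rcases le_or_gt u (-1) with hu' | hu'
  · rw [arccos_of_le_neg_one hu']
    exact iff_of_true (hu'.trans (neg_one_le_cos _)) (Real.Angle.abs_toReal_le_pi _)
  · rw [angleFrom, ← Real.Angle.coe_sub, ← Real.Angle.cos_coe, ← Real.Angle.cos_toReal, ← cos_abs]
    conv_lhs => rw [← cos_arccos hu'.le hu]
    exact Real.strictAntiOn_cos.le_iff_ge ⟨arccos_nonneg u, arccos_le_pi u⟩
      ⟨abs_nonneg _, Real.Angle.abs_toReal_le_pi _⟩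

theorem isClosed_setOf_abs_angleFrom_le {β φ : ℝ} (hφ : φ ∈ Icc 0 π) :
    IsClosed {t | |angleFrom β t| ≤ φ} := by
  have : {t | |angleFrom β t| ≤ φ} = {t | cos φ ≤ cos (t - β)} := by
    ext t
    have := le_cos_iff_abs_angleFrom_le (cos_le_one φ) β t
    rw [arccos_cos hφ.1 hφ.2] at this
    exact this.symm
  rw [this]
  exact isClosed_le continuous_const (by fun_prop)

theorem eventually_angleFrom_nhdsLT (β t : ℝ) :
    ∀ᶠ s in 𝓝[<] t, angleFrom β s = angleFrom β t - (t - s) := by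
  obtain ⟨hy, hy'⟩ := angleFrom_mem_Ioc β t
  filter_upwards [Ioo_mem_nhdsLT (show t - (angleFrom β t + π) < t by linarith)] with s hs
  have ht : (t : Real.Angle) = (β + angleFrom β t : ℝ) := (angleFrom_eq_iff ⟨hy, hy'⟩).1 rfl
  rw [angleFrom_eq_iff ⟨by linarith [hs.1], by linarith [hs.2]⟩,
    show β + (angleFrom β t - (t - s)) = β + angleFrom β t - t + s by ring, Real.Angle.coe_add,
    Real.Angle.coe_sub, ← ht, sub_self, zero_add]

theorem eventually_abs_angleFrom_le_iff (β φ t : ℝ) :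
    ∀ᶠ s in 𝓝[<] t,
      (|angleFrom β s| ≤ φ ↔ -φ < angleFrom β t ∧ angleFrom β t ≤ φ) := by
  set y := angleFrom β t
  have hshift := eventually_angleFrom_nhdsLT β t
  by_cases hin : -φ < y ∧ y ≤ φ
  · filter_upwards [hshift, Ioo_mem_nhdsLT (show t - (y + φ) < t by linarith)] with s hs hsI
    rw [hs]
    exact iff_of_true (abs_le.2 ⟨by linarith [hsI.1], by linarith [hsI.2]⟩) hin
  rcases not_and_or.1 hin with hy | hy
  · filter_upwards [hshift, self_mem_nhdsWithin] with s hs (hsI : s < t)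
    rw [hs]
    exact iff_of_false (fun h => by linarith [neg_abs_le (y - (t - s))]) hin
  · filter_upwards [hshift, Ioo_mem_nhdsLT (show t - (y - φ) < t by linarith)] with s hs hsI
    rw [hs]
    exact iff_of_false (fun h => by linarith [le_abs_self (y - (t - s)), hsI.1]) hin

theorem angleFrom_eq_neg_iff {β φ a θ : ℝ} (hφ : 0 ≤ φ) (hθ : θ ∈ Ico a (a + 2 * π)) :
    angleFrom β θ = -φ ↔ φ < π ∧ θ = toIcoMod two_pi_pos a (β - φ) := by
  constructor
  · intro h
    have hπ : φ < π := by linarith [(angleFrom_mem_Ioc β θ).1]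
    refine ⟨hπ, ?_⟩
    rw [← Real.Angle.coe_eq_coe_iff_eq_toIcoMod hθ, sub_eq_add_neg]
    exact (angleFrom_eq_iff ⟨by linarith, by linarith⟩).1 h
  · rintro ⟨hπ, h⟩
    rw [angleFrom_eq_iff ⟨by linarith, by linarith⟩, ← sub_eq_add_neg]
    exact (Real.Angle.coe_eq_coe_iff_eq_toIcoMod hθ).2 h

end Angles

section Disks

theorem norm_rot_one_sub_sq (t : ℝ) (m : ℂ) :
    ‖rot t 1 - m‖ ^ 2 = 1 + ‖m‖ ^ 2 - 2 * ‖m‖ * cos (t - Complex.arg m) := by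
  have hre : (rot t 1 - m).re = cos t - ‖m‖ * cos (Complex.arg m) := by
    rw [Complex.sub_re, rot_one, Complex.exp_ofReal_mul_I_re, Complex.norm_mul_cos_arg]
  have him : (rot t 1 - m).im = sin t - ‖m‖ * sin (Complex.arg m) := by
    rw [Complex.sub_im, rot_one, Complex.exp_ofReal_mul_I_im, Complex.norm_mul_sin_arg]
  rw [Complex.sq_norm, Complex.normSq_apply, hre, him, cos_sub]
  linear_combination sin_sq_add_cos_sq t + ‖m‖ ^ 2 * sin_sq_add_cos_sq (Complex.arg m)

theorem exists_arc_of_disk {m : ℂ} {r : ℝ} (hmeet : ({y : ℂ | ‖y - m‖ ≤ r} ∩ S1).Nonempty) :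
    ∃ β φ : ℝ, φ ∈ Icc 0 π ∧ ∀ t : ℝ, ‖rot t 1 - m‖ ≤ r ↔ |angleFrom β t| ≤ φ := by
  obtain ⟨x, hxr : ‖x - m‖ ≤ r, hx⟩ := hmeet
  rcases eq_or_ne m 0 with rfl | hm
  · refine ⟨0, π, ⟨pi_pos.le, le_rfl⟩, fun t => iff_of_true ?_ (Real.Angle.abs_toReal_le_pi _)⟩
    rw [sub_zero] at hxr ⊢
    exact (rot_one_mem_S1 t).trans_le (hx.symm.trans_le hxr)
  set u := (1 + ‖m‖ ^ 2 - r ^ 2) / (2 * ‖m‖)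
  have hr : 0 ≤ r := (norm_nonneg _).trans hxr
  have hdisk : ∀ t : ℝ, ‖rot t 1 - m‖ ≤ r ↔ u ≤ cos (t - Complex.arg m) := fun t => by
    rw [← sq_le_sq₀ (norm_nonneg _) hr, norm_rot_one_sub_sq, div_le_iff₀ (by positivity)]
    constructor <;> intro h <;> linarith
  have hu : u ≤ 1 := ((hdisk _).1 (by rwa [rot_one_arg hx])).trans (cos_le_one _)
  exact ⟨Complex.arg m, arccos u, ⟨arccos_nonneg u, arccos_le_pi u⟩,
    fun t => (hdisk t).trans (le_cos_iff_abs_angleFrom_le hu _ _)⟩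

theorem Hsum_eq_card_filter {n : ℕ} (v : Fin n → ℂ × ℝ) (x : ℂ) :
    Hsum v x = Finset.card {i | ‖x - (v i).1‖ ≤ (v i).2} := by
  rw [Hsum, Finset.card_filter]
  rfl

theorem isClosed_setOf_le_Hsum {n : ℕ} (v : Fin n → ℂ × ℝ) (k : ℕ) :
    IsClosed {x | k ≤ Hsum v x} := by
  simp_rw [Hsum_eq_card_filter]
  exact isClosed_setOf_le_card_filter_mem (C := fun i => {x : ℂ | ‖x - (v i).1‖ ≤ (v i).2})
    (fun i => isClosed_le (by fun_prop) continuous_const) k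

end Disks

section Arcs

open Finset

variable {ι : Type*} [Fintype ι] (β φ : ι → ℝ)

-- Arc `i` has centre `β i` and half-width `φ i ∈ [0, π]`, the whole circle when `φ i = π`.
-- `arcLeftCount` is the left limit of `arcCount`, and `arcStarts a` lists the starting points of
-- the proper arcs, reduced into `[a, a + 2π)`.
def arcCount (t : ℝ) : ℕ := #{i | |angleFrom (β i) t| ≤ φ i}

def arcLeftCount (t : ℝ) : ℕ := #{i | -φ i < angleFrom (β i) t ∧ angleFrom (β i) t ≤ φ i}

def arcStarts (a : ℝ) : Finset ℝ :=
  ({i | φ i < π} : Finset ι).image fun i => toIcoMod two_pi_pos a (β i - φ i)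

theorem arcCount_congr {s t : ℝ} (h : (s : Real.Angle) = t) :
    arcCount β φ s = arcCount β φ t := by
  simp only [arcCount, angleFrom_congr h]

theorem eventually_arcCount_nhdsLT (t : ℝ) :
    ∀ᶠ s in 𝓝[<] t, arcCount β φ s = arcLeftCount β φ t := by
  filter_upwards [eventually_all.2 fun i => eventually_abs_angleFrom_le_iff (β i) (φ i) t]
    with s hs
  exact congrArg card (filter_congr fun i _ => hs i)

theorem arcCount_le_card (t : ℝ) : arcCount β φ t ≤ Fintype.card ι := card_filter_le _ _

theorem exists_arcCount_eq_sInf_and_sSup : ∃ a t₀ : ℝ,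
    arcCount β φ a = sInf (range (arcCount β φ)) ∧ arcCount β φ t₀ = sSup (range (arcCount β φ)) ∧
      ∀ t, arcCount β φ a ≤ arcCount β φ t ∧ arcCount β φ t ≤ arcCount β φ t₀ := by
  have hbdd : BddAbove (range (arcCount β φ)) :=
    bddAbove_def.2 ⟨_, forall_mem_range.2 (arcCount_le_card β φ)⟩
  obtain ⟨a, ha⟩ := Nat.sInf_mem (range_nonempty (arcCount β φ))
  obtain ⟨t₀, ht₀⟩ := Nat.sSup_mem (range_nonempty (arcCount β φ)) hbdd
  refine ⟨a, t₀, ha, ht₀, fun t => ⟨?_, ?_⟩⟩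
  · rw [ha]
    exact Nat.sInf_le (mem_range_self t)
  · rw [ht₀]
    exact le_csSup hbdd (mem_range_self t)

variable {β φ}

theorem card_not_lt_pi_le_arcCount (t : ℝ) : #{i | ¬ φ i < π} ≤ arcCount β φ t :=
  card_le_card fun i hi => by
    rw [mem_filter] at hi ⊢
    exact ⟨hi.1, (abs_le.2 ⟨(angleFrom_mem_Ioc _ _).1.le, (angleFrom_mem_Ioc _ _).2⟩).trans
      (not_lt.1 hi.2)⟩

theorem arcCount_add_two_pi (a : ℝ) : arcCount β φ (a + 2 * π) = arcCount β φ a :=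
  arcCount_congr β φ (by rw [Real.Angle.coe_add, Real.Angle.coe_two_pi, add_zero])

theorem isClosed_setOf_le_arcCount (hφ : ∀ i, φ i ∈ Icc 0 π) (k : ℕ) :
    IsClosed {t | k ≤ arcCount β φ t} :=
  isClosed_setOf_le_card_filter_mem (fun i => isClosed_setOf_abs_angleFrom_le (hφ i)) k

theorem arcCount_eq_arcLeftCount_add (hφ : ∀ i, 0 ≤ φ i) (t : ℝ) :
    arcCount β φ t = arcLeftCount β φ t + #{i | angleFrom (β i) t = -φ i} := by
  rw [arcCount, ← card_filter_add_card_filter_not (fun i => -φ i < angleFrom (β i) t),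
    filter_filter, filter_filter, arcLeftCount]
  congr 1 <;> refine congrArg card (filter_congr fun i _ => ?_) <;> rw [abs_le]
  · exact ⟨fun h => ⟨h.2, h.1.2⟩, fun h => ⟨⟨h.1.le, h.2⟩, h.1⟩⟩
  · rw [not_lt]
    exact ⟨fun h => le_antisymm h.2 h.1.1, fun h => ⟨⟨h.ge, by linarith [hφ i]⟩, h.le⟩⟩

theorem arcStarts_subset_Ico (a : ℝ) : ↑(arcStarts β φ a) ⊆ Ico a (a + 2 * π) := by
  intro θ hθ
  obtain ⟨i, -, rfl⟩ := mem_image.1 hθ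
  exact toIcoMod_mem_Ico _ _ _

theorem mem_arcStarts_of_arcLeftCount_lt (hφ : ∀ i, 0 ≤ φ i) {a θ : ℝ}
    (hθ : θ ∈ Ico a (a + 2 * π)) (h : arcLeftCount β φ θ < arcCount β φ θ) :
    θ ∈ arcStarts β φ a := by
  rw [arcCount_eq_arcLeftCount_add hφ] at h
  obtain ⟨i, hi⟩ := card_pos.1 (Nat.lt_of_add_lt_add_left (n := arcLeftCount β φ θ) (by omega))
  obtain ⟨hπ, rfl⟩ := (angleFrom_eq_neg_iff (hφ i) hθ).1 (mem_filter.1 hi).2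
  exact mem_image_of_mem _ (mem_filter.2 ⟨mem_univ i, hπ⟩)

theorem sum_arcStarts_arcCount_sub_arcLeftCount (hφ : ∀ i, 0 ≤ φ i) (a : ℝ) :
    ∑ θ ∈ arcStarts β φ a, (arcCount β φ θ - arcLeftCount β φ θ) = #{i | φ i < π} := by
  rw [card_eq_sum_card_image (fun i => toIcoMod two_pi_pos a (β i - φ i))]
  refine sum_congr rfl fun θ hθ => ?_
  rw [arcCount_eq_arcLeftCount_add hφ, Nat.add_sub_cancel_left, filter_filter]
  congr 1
  exact filter_congr fun i _ => (angleFrom_eq_neg_iff (hφ i) (arcStarts_subset_Ico a hθ)).trans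
    (and_congr_right fun _ => eq_comm)

variable {a : ℝ} {k : ℕ}

theorem setOf_arcLeftCount_lt_eq (hφ : ∀ i, 0 ≤ φ i) (hk : arcCount β φ a < k) :
    {t ∈ Set.Icc a (a + 2 * π) | arcLeftCount β φ t < k ∧ k ≤ arcCount β φ t} =
      ↑{θ ∈ arcStarts β φ a | arcLeftCount β φ θ < k ∧ k ≤ arcCount β φ θ} := by
  ext θ
  simp only [mem_sep_iff, coe_filter]
  refine ⟨fun ⟨hθ, hL, hG⟩ => ⟨?_, hL, hG⟩, fun ⟨hθ, hL, hG⟩ => ⟨?_, hL, hG⟩⟩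
  · have hθ' : θ ∈ Ico a (a + 2 * π) := ⟨hθ.1, hθ.2.lt_of_ne fun h => by
      rw [h, arcCount_add_two_pi] at hG; omega⟩
    exact mem_arcStarts_of_arcLeftCount_lt hφ hθ' (hL.trans_le hG)
  · exact Ico_subset_Icc_self (arcStarts_subset_Ico a hθ)

theorem natCard_connectedComponents_arc_superlevel (hφ : ∀ i, φ i ∈ Icc 0 π)
    (hk : arcCount β φ a < k) :
    Nat.card (ConnectedComponents {t ∈ Set.Icc a (a + 2 * π) | k ≤ arcCount β φ t}) =
      #{θ ∈ arcStarts β φ a | arcLeftCount β φ θ < k ∧ k ≤ arcCount β φ θ} := by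
  rw [natCard_connectedComponents_superlevel (eventually_arcCount_nhdsLT β φ)
    (isClosed_setOf_le_arcCount hφ k) hk, setOf_arcLeftCount_lt_eq (fun i => (hφ i).1) hk,
    Nat.card_coe_set_eq, ncard_coe_finset]

theorem card_filter_arcStarts_pos (hφ : ∀ i, φ i ∈ Icc 0 π) (hk : arcCount β φ a < k)
    {t : ℝ} (ht : k ≤ arcCount β φ t) :
    0 < #{θ ∈ arcStarts β φ a | arcLeftCount β φ θ < k ∧ k ≤ arcCount β φ θ} := by
  have hcoe : ↑{θ ∈ arcStarts β φ a | arcLeftCount β φ θ < k ∧ k ≤ arcCount β φ θ} =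
      leftEndpoints {t ∈ Set.Icc a (a + 2 * π) | k ≤ arcCount β φ t} := by
    rw [← setOf_arcLeftCount_lt_eq (fun i => (hφ i).1) hk,
      leftEndpoints_superlevel (eventually_arcCount_nhdsLT β φ) hk]
  refine card_pos.2 (coe_nonempty.1 (hcoe ▸ leftEndpoints_nonempty
    (isCompact_Icc.inter_right (isClosed_setOf_le_arcCount hφ k)) ?_))
  refine ⟨toIcoMod two_pi_pos a t, Ico_subset_Icc_self (toIcoMod_mem_Ico _ _ _), ?_⟩
  rwa [arcCount_congr β φ (Real.Angle.coe_toIcoMod t a)]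

theorem sum_natCard_connectedComponents_arc_superlevel (hφ : ∀ i, φ i ∈ Icc 0 π) {t₀ : ℝ}
    (hbounds : ∀ t, arcCount β φ a ≤ arcCount β φ t ∧ arcCount β φ t ≤ arcCount β φ t₀) :
    ∑ k ∈ Icc (arcCount β φ a + 1) (arcCount β φ t₀),
        (Nat.card (ConnectedComponents {t ∈ Set.Icc a (a + 2 * π) | k ≤ arcCount β φ t}) - 1) +
      (arcCount β φ t₀ - arcCount β φ a) = #{i | φ i < π} := by
  have hLG : ∀ θ ∈ arcStarts β φ a, arcCount β φ a ≤ arcLeftCount β φ θ ∧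
      arcCount β φ θ ≤ arcCount β φ t₀ := fun θ _ => by
    obtain ⟨s, hs⟩ := (eventually_arcCount_nhdsLT β φ θ).exists
    exact ⟨hs ▸ (hbounds s).1, (hbounds θ).2⟩
  have hk : ∀ k ∈ Finset.Icc (arcCount β φ a + 1) (arcCount β φ t₀), arcCount β φ a < k :=
    fun k hk => by rw [Finset.mem_Icc] at hk; omega
  have hc : ∀ k ∈ Finset.Icc (arcCount β φ a + 1) (arcCount β φ t₀),
      Nat.card (ConnectedComponents {t ∈ Set.Icc a (a + 2 * π) | k ≤ arcCount β φ t}) - 1 =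
        #{θ ∈ arcStarts β φ a | arcLeftCount β φ θ < k ∧ k ≤ arcCount β φ θ} - 1 :=
    fun k hk' => by rw [natCard_connectedComponents_arc_superlevel hφ (hk k hk')]
  rw [sum_congr rfl hc, ← sum_arcStarts_arcCount_sub_arcLeftCount (fun i => (hφ i).1) a,
    ← sum_card_filter_lt_and_le_eq_sum_sub _ _ _ hLG, show arcCount β φ t₀ - arcCount β φ a =
      #(Finset.Icc (arcCount β φ a + 1) (arcCount β φ t₀)) by simp, card_eq_sum_ones,
    ← sum_add_distrib]
  exact sum_congr rfl fun k hk' =>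
    Nat.sub_add_cancel (card_filter_arcStarts_pos hφ (hk k hk') (Finset.mem_Icc.1 hk').2)

end Arcs

theorem stmt17_general {n : ℕ} (v : Fin n → ℂ × ℝ)
    (hmeet : ∀ i : Fin n, ({y : ℂ | ‖y - (v i).1‖ ≤ (v i).2} ∩ S1).Nonempty) :
    max (maxOnS1 (Hsum v)) (maxOnS1 (Hsum v) - minOnS1 (Hsum v) + tau (Hsum v)) ≤ n ∧
    n ≤ maxOnS1 (Hsum v) + tau (Hsum v) := by
  choose β φ hφ hdisk using fun i => exists_arc_of_disk (hmeet i)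
  have hHG : ∀ t, Hsum v (rot t 1) = arcCount β φ t := fun t => by
    rw [Hsum_eq_card_filter, arcCount]
    exact congrArg _ (Finset.filter_congr fun i _ => hdisk i t)
  have himage : Hsum v '' S1 = range (arcCount β φ) := by
    rw [image_S1_eq_range]
    simp_rw [hHG]
  obtain ⟨a, t₀, ha, ht₀, hbounds⟩ := exists_arcCount_eq_sInf_and_sSup β φ
  have hmin : minOnS1 (Hsum v) = arcCount β φ a := by rw [minOnS1, himage, ha]
  have hmax : maxOnS1 (Hsum v) = arcCount β φ t₀ := by rw [maxOnS1, himage, ht₀]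
  have htau : tau (Hsum v) = ∑ k ∈ Finset.Icc (arcCount β φ a + 1) (arcCount β φ t₀),
      (Nat.card (ConnectedComponents {t ∈ Icc a (a + 2 * π) | k ≤ arcCount β φ t}) - 1) := by
    rw [tau, hmin, hmax]
    refine Finset.sum_congr rfl fun k hk => ?_
    rw [numCC_superlevel_eq hHG (isClosed_setOf_le_Hsum v k) (a := a)
      (by rw [Finset.mem_Icc] at hk; omega)]
  have hcount := sum_natCard_connectedComponents_arc_superlevel hφ hbounds
  have hsplit := Finset.card_filter_add_card_filter_not (s := Finset.univ) (fun i => φ i < π)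
  have hfull := card_not_lt_pi_le_arcCount (β := β) (φ := φ) a
  have hle_card := arcCount_le_card β φ t₀
  have hmin_le_max := (hbounds t₀).1
  simp only [Finset.card_univ, Fintype.card_fin] at hsplit hle_card
  rw [htau, hmin, hmax]
  omega

/-- if `H_v` is properly u.s.c., all boundary traces have exactly 0
or 2 elements, and every disk meets `S¹`, then
`max(H_v*, H_v* − H_{v*} + τ(H_v)) ≤ n ≤ H_v* + τ(H_v)`. -/
theorem stmt17 {n : ℕ} (v : Fin n → ℂ × ℝ) (hr : ∀ i, 0 < (v i).2)
    (h : ProperlyUSC (Hsum v))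
    (hcard : ∀ i : Fin n,
      bTrace (v i).1 (v i).2 = ∅ ∨ (bTrace (v i).1 (v i).2).ncard = 2)
    (hmeet : ∀ i : Fin n, ({y : ℂ | ‖y - (v i).1‖ ≤ (v i).2} ∩ S1).Nonempty) :
    max (maxOnS1 (Hsum v)) (maxOnS1 (Hsum v) - minOnS1 (Hsum v) + tau (Hsum v)) ≤ n ∧
    n ≤ maxOnS1 (Hsum v) + tau (Hsum v) :=
  stmt17_general v hmeet
end
end
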